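/- Let (M,J,g) be a (J²=±1)-metric manifold with αε = -1. Then (M,J,g) is nearly Kähler type (i.e., (∇ᵍ_X J)X = 0 for all X) if and only if g(T⁰(X,Y), X) = 0 for all vector fields X,Y, where T⁰ is the torsion of the first canonical connection. -/

import Mathlib

/- Abstract algebraic model of a `(J² = ±1)`-metric manifold:
`V` plays the role of the module of (smooth) vector fields (an `ℝ`-vector space),
`F` plays the role of the ring of smooth functions (an `ℝ`-algebra),
`g : V →ₗ[ℝ] V →ₗ[ℝ] F` the metric, `J : V →ₗ[ℝ] V` the almost (para)complex/product
structure, `nabla : V → V →ₗ[ℝ] V` the Levi-Civita connection, `Xact X : F →ₗ[ℝ] F`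
the action of the vector field `X` on functions (`Xact X f = X f`), and
`bracket` the Lie bracket of vector fields. -/

variable {V : Type*} [AddCommGroup V] [Module ℝ V]

/-- The covariant derivative `(∇_X J) Y = ∇_X (J Y) - J (∇_X Y)`. -/
def nablaJ (nabla : V → V →ₗ[ℝ] V) (J : V →ₗ[ℝ] V) (X Y : V) : V :=
  nabla X (J Y) - J (nabla X Y)

/-- The first canonical connection `∇⁰_X Y = ∇_X Y + (-α/2) • (∇_X J)(J Y)`. -/
noncomputable def canon (α : ℝ) (nabla : V → V →ₗ[ℝ] V) (J : V →ₗ[ℝ] V) (X Y : V) : V :=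
  nabla X Y - (α / 2) • nablaJ nabla J X (J Y)

/-- The torsion `T⁰(X,Y) = ∇⁰_X Y - ∇⁰_Y X - [X,Y]` of the first canonical connection. -/
noncomputable def torsion0 (α : ℝ) (nabla : V → V →ₗ[ℝ] V) (J : V →ₗ[ℝ] V)
    (bracket : V → V → V) (X Y : V) : V :=
  canon α nabla J X Y - canon α nabla J Y X - bracket X Y

/-- The Nijenhuis tensor of `J`, expressed through the Levi-Civita connection:
`N_J(X,Y) = (∇_X J)(JY) + (∇_{JX} J)Y - (∇_Y J)(JX) - (∇_{JY} J)X`. -/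
def nijenhuis (nabla : V → V →ₗ[ℝ] V) (J : V →ₗ[ℝ] V) (X Y : V) : V :=
  nablaJ nabla J X (J Y) + nablaJ nabla J (J X) Y
    - nablaJ nabla J Y (J X) - nablaJ nabla J (J Y) X

/-! Torsion-freeness of `∇` reduces `T⁰(X,Y)` to `-(α/2)((∇_X J)(JY) - (∇_Y J)(JX))`.
Because `∇_Y J` anticommutes with `J` and is `g`-skew (as `J` is, by `αε = -1`), the term
`g((∇_Y J)(JX), X)` equals its own negative and vanishes, leaving
`g(T⁰(X,Y), X) = (α/2) g((∇_X J)X, JY)`. As `J` is invertible and `g` nondegenerate, this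
vanishes for all `Y` exactly when `(∇_X J)X = 0`. -/

section Lemmas

variable {α : ℝ} {nabla : V → V →ₗ[ℝ] V} {J : V →ₗ[ℝ] V}

/-- Differentiating `J² = α` gives `(∇_Y J) J = -J (∇_Y J)`. -/
theorem nablaJ_apply_J (hJ2 : ∀ x, J (J x) = α • x) (Y X : V) :
    nablaJ nabla J Y (J X) = -J (nablaJ nabla J Y X) := by
  simp only [nablaJ, hJ2, map_smul, map_sub]
  abel

theorem torsion0_eq {bracket : V → V → V} (htf : ∀ X Y : V, nabla X Y - nabla Y X = bracket X Y)
    (X Y : V) :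
    torsion0 α nabla J bracket X Y
      = -(α / 2) • (nablaJ nabla J X (J Y) - nablaJ nabla J Y (J X)) := by
  simp only [torsion0, canon, ← htf, smul_sub, neg_smul]
  abel

variable {F : Type*} [AddCommGroup F] [Module ℝ F] {g : V →ₗ[ℝ] V →ₗ[ℝ] F}

theorem metric_J_left {ε : ℝ} (hα2 : α * α = 1) (hαε : α * ε = -1)
    (hJ2 : ∀ x, J (J x) = α • x) (hJg : ∀ x y, g (J x) (J y) = ε • g x y) (x y : V) :
    g (J x) y = -g x (J y) := by
  have h := hJg x (J y)
  rw [hJ2, map_smul] at h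
  calc g (J x) y = α • α • g (J x) y := by rw [smul_smul, hα2, one_smul]
    _ = -g x (J y) := by rw [h, smul_smul, hαε, neg_one_smul]

theorem metric_nablaJ_left {Xact : V → F →ₗ[ℝ] F}
    (hcompat : ∀ X Y Z : V, Xact X (g Y Z) = g (nabla X Y) Z + g Y (nabla X Z))
    (hJskew : ∀ x y, g (J x) y = -g x (J y)) (X A B : V) :
    g (nablaJ nabla J X A) B = -g A (nablaJ nabla J X B) := by
  have hXact : Xact X (g (J A) B) = -Xact X (g A (J B)) := by rw [hJskew, map_neg]
  rw [hcompat, hcompat] at hXact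
  simp only [nablaJ, map_sub, LinearMap.sub_apply, hJskew] at hXact ⊢
  rw [← sub_eq_zero] at hXact ⊢
  rw [← hXact]
  abel

theorem metric_nablaJ_J_self {Xact : V → F →ₗ[ℝ] F} (hJ2 : ∀ x, J (J x) = α • x)
    (hgsymm : ∀ x y, g x y = g y x)
    (hcompat : ∀ X Y Z : V, Xact X (g Y Z) = g (nabla X Y) Z + g Y (nabla X Z))
    (hJskew : ∀ x y, g (J x) y = -g x (J y)) (X Y : V) :
    g (nablaJ nabla J Y (J X)) X = 0 := by
  have h : g (nablaJ nabla J Y (J X)) X = -g (nablaJ nabla J Y (J X)) X := by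
    calc g (nablaJ nabla J Y (J X)) X = g (nablaJ nabla J Y X) (J X) := by
          rw [nablaJ_apply_J hJ2, map_neg, LinearMap.neg_apply, hJskew, neg_neg]
      _ = -g X (nablaJ nabla J Y (J X)) := metric_nablaJ_left hcompat hJskew Y X (J X)
      _ = -g (nablaJ nabla J Y (J X)) X := by rw [hgsymm]
  have h2 : (2 : ℝ) • g (nablaJ nabla J Y (J X)) X = 0 := by
    rw [two_smul]
    nth_rewrite 2 [h]
    exact add_neg_cancel _
  exact (smul_eq_zero.mp h2).resolve_left two_ne_zero

theorem metric_torsion0_self {Xact : V → F →ₗ[ℝ] F} {bracket : V → V → V}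
    (hJ2 : ∀ x, J (J x) = α • x) (hgsymm : ∀ x y, g x y = g y x)
    (hcompat : ∀ X Y Z : V, Xact X (g Y Z) = g (nabla X Y) Z + g Y (nabla X Z))
    (hJskew : ∀ x y, g (J x) y = -g x (J y))
    (htf : ∀ X Y : V, nabla X Y - nabla Y X = bracket X Y) (X Y : V) :
    g (torsion0 α nabla J bracket X Y) X = (α / 2) • g (nablaJ nabla J X X) (J Y) := by
  rw [torsion0_eq htf, map_smul, map_sub, LinearMap.smul_apply, LinearMap.sub_apply,
    metric_nablaJ_J_self hJ2 hgsymm hcompat hJskew, metric_nablaJ_left hcompat hJskew,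
    hgsymm (J Y), sub_zero, neg_smul, smul_neg, neg_neg]

end Lemmas

theorem stmt13_general {F : Type*} [CommRing F] [Algebra ℝ F]
    (α ε : ℝ) (hα : α = 1 ∨ α = -1) (hαε : α * ε = -1)
    (J : V →ₗ[ℝ] V) (hJ2 : ∀ x, J (J x) = α • x)
    (g : V →ₗ[ℝ] V →ₗ[ℝ] F) (hgsymm : ∀ x y, g x y = g y x)
    (hgnd : ∀ x : V, (∀ y : V, g x y = 0) → x = 0)
    (hJg : ∀ x y, g (J x) (J y) = ε • g x y)
    (nabla : V → V →ₗ[ℝ] V) (Xact : V → F →ₗ[ℝ] F)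
    (hcompat : ∀ X Y Z : V, Xact X (g Y Z) = g (nabla X Y) Z + g Y (nabla X Z))
    (bracket : V → V → V)
    (htf : ∀ X Y : V, nabla X Y - nabla Y X = bracket X Y) :
    (∀ X : V, nablaJ nabla J X X = 0) ↔
      (∀ X Y : V, g (torsion0 α nabla J bracket X Y) X = 0) := by
  have hα2 : α * α = 1 := by rcases hα with rfl | rfl <;> norm_num
  have hJskew := metric_J_left hα2 hαε hJ2 hJg
  have hkey := metric_torsion0_self hJ2 hgsymm hcompat hJskew htf
  constructor
  · intro h X Y
    rw [hkey, h X, map_zero, LinearMap.zero_apply, smul_zero]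
  · intro h X
    refine hgnd _ fun Z => ?_
    -- `Y := α • J Z` has `J Y = α² • Z = Z`
    have hZ := h X (α • J Z)
    rw [hkey, map_smul, hJ2, smul_smul, hα2, one_smul] at hZ
    exact (smul_eq_zero.mp hZ).resolve_left (by rcases hα with rfl | rfl <;> norm_num)

/-- If `αε = -1`, the manifold is nearly Kähler type (`(∇ᵍ_X J)X = 0` for all `X`) iff
`g(T⁰(X,Y), X) = 0` for all `X, Y`. -/
theorem stmt13 {F : Type*} [CommRing F] [Algebra ℝ F]
    (α ε : ℝ) (hα : α = 1 ∨ α = -1) (hε : ε = 1 ∨ ε = -1) (hαε : α * ε = -1)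
    (J : V →ₗ[ℝ] V) (hJ2 : ∀ x, J (J x) = α • x)
    (g : V →ₗ[ℝ] V →ₗ[ℝ] F) (hgsymm : ∀ x y, g x y = g y x)
    (hgnd : ∀ x : V, (∀ y : V, g x y = 0) → x = 0)
    (hJg : ∀ x y, g (J x) (J y) = ε • g x y)
    (nabla : V → V →ₗ[ℝ] V) (Xact : V → F →ₗ[ℝ] F)
    (hcompat : ∀ X Y Z : V, Xact X (g Y Z) = g (nabla X Y) Z + g Y (nabla X Z))
    (bracket : V → V → V)
    (htf : ∀ X Y : V, nabla X Y - nabla Y X = bracket X Y) :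
    (∀ X : V, nablaJ nabla J X X = 0) ↔
      (∀ X Y : V, g (torsion0 α nabla J bracket X Y) X = 0) :=
  stmt13_general α ε hα hαε J hJ2 g hgsymm hgnd hJg nabla Xact hcompat bracket htf
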